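/- Fix integers 0 ≤ k < K and a confidence parameter β ∈ (0,1). The polynomial equation in ε, (β/(K+1)) ∑_{i=k}^{K} C(i,k)(1-ε)^{i-k} − C(K,k)(1-ε)^{K-k} = 0, has exactly one solution ε in the open interval (0,1). -/
import Mathlib

open Finset

private lemma waj_unique_aux (k K : ℕ) (hkK : k < K) (β : ℝ) (hβ0 : 0 < β)
    (τ1 τ2 : ℝ) (h2 : 0 < τ2) (h12 : τ2 < τ1)
    (e1 : (β / (K + 1)) * ∑ i ∈ Icc k K, (i.choose k : ℝ) * τ1 ^ (i - k)
        = (K.choose k : ℝ) * τ1 ^ (K - k))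
    (e2 : (β / (K + 1)) * ∑ i ∈ Icc k K, (i.choose k : ℝ) * τ2 ^ (i - k)
        = (K.choose k : ℝ) * τ2 ^ (K - k)) : False := by
  have h1 : 0 < τ1 := h2.trans h12
  have hc : 0 < β / ((K : ℝ) + 1) := by positivity
  have hsum : ∑ i ∈ Icc k K, (i.choose k : ℝ) * τ1 ^ (i - k) * τ2 ^ (K - k)
      < ∑ i ∈ Icc k K, (i.choose k : ℝ) * τ2 ^ (i - k) * τ1 ^ (K - k) := by
    apply Finset.sum_lt_sum
    · intro i hi
      simp only [mem_Icc] at hi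
      have hik : i - k + (K - i) = K - k := by omega
      rw [← hik, pow_add, pow_add]
      have hle : τ2 ^ (K - i) ≤ τ1 ^ (K - i) := pow_le_pow_left₀ h2.le h12.le _
      have hfac : (0:ℝ) ≤ (i.choose k : ℝ) * τ1 ^ (i - k) * τ2 ^ (i - k) := by positivity
      nlinarith [mul_le_mul_of_nonneg_left hle hfac]
    · refine ⟨k, mem_Icc.mpr ⟨le_refl k, hkK.le⟩, ?_⟩
      simp only [Nat.choose_self, Nat.cast_one, Nat.sub_self, pow_zero, one_mul, mul_one]
      exact pow_lt_pow_left₀ h12 h2.le (by omega)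
  have H : (β / (K + 1)) * ((∑ i ∈ Icc k K, (i.choose k : ℝ) * τ1 ^ (i - k)) * τ2 ^ (K - k))
      < (β / (K + 1)) * ((∑ i ∈ Icc k K, (i.choose k : ℝ) * τ2 ^ (i - k)) * τ1 ^ (K - k)) := by
    apply mul_lt_mul_of_pos_left _ hc
    rw [Finset.sum_mul, Finset.sum_mul]
    exact hsum
  rw [← mul_assoc, ← mul_assoc, e1, e2] at H
  nlinarith [H]

/-- The wait-and-judge polynomial equation
(β/(K+1)) ∑_{i=k}^{K} C(i,k)(1-ε)^{i-k} − C(K,k)(1-ε)^{K-k} = 0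
has exactly one solution ε in (0,1). -/
theorem stmt_3 (k K : ℕ) (hkK : k < K) (β : ℝ) (hβ : β ∈ Set.Ioo (0:ℝ) 1) :
    ∃! ε : ℝ, ε ∈ Set.Ioo (0:ℝ) 1 ∧
      (β / (K + 1)) * ∑ i ∈ Icc k K, (i.choose k : ℝ) * (1 - ε) ^ (i - k)
        - (K.choose k : ℝ) * (1 - ε) ^ (K - k) = 0 := by
  obtain ⟨hβ0, hβ1⟩ := hβ
  set f : ℝ → ℝ := fun ε => (β / (K + 1)) * ∑ i ∈ Icc k K, (i.choose k : ℝ) * (1 - ε) ^ (i - k)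
        - (K.choose k : ℝ) * (1 - ε) ^ (K - k) with hf
  have hcont : Continuous f := by
    apply Continuous.sub
    · exact continuous_const.mul (continuous_finset_sum _ fun i _ =>
        continuous_const.mul ((continuous_const.sub continuous_id).pow _))
    · exact continuous_const.mul ((continuous_const.sub continuous_id).pow _)
  have hCK : 0 < (K.choose k : ℝ) := by
    exact_mod_cast Nat.choose_pos hkK.le
  have hf0 : f 0 < 0 := by
    have hsum : ∑ i ∈ Icc k K, (i.choose k : ℝ) = ((K + 1).choose (k + 1) : ℝ) := by
      rw [← Nat.cast_sum, Nat.sum_Icc_choose]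
    have hrel : ((K : ℝ) + 1) * (K.choose k : ℝ) = ((K + 1).choose (k + 1) : ℝ) * ((k : ℝ) + 1) := by
      exact_mod_cast Nat.add_one_mul_choose_eq K k
    have hCK1 : 0 < ((K + 1).choose (k + 1) : ℝ) := by
      exact_mod_cast Nat.choose_pos (by omega : k + 1 ≤ K + 1)
    have hK1 : (0:ℝ) < (K : ℝ) + 1 := by positivity
    simp only [hf, sub_zero, one_pow, mul_one, sub_neg]
    rw [hsum, div_mul_eq_mul_div, div_lt_iff₀ hK1]
    nlinarith [hCK1, hβ1, (Nat.cast_nonneg k : (0:ℝ) ≤ k)]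
  have hf1 : 0 < f 1 := by
    have hsum : ∑ i ∈ Icc k K, (i.choose k : ℝ) * (1 - 1 : ℝ) ^ (i - k) = 1 := by
      rw [Finset.sum_eq_single k]
      · simp
      · intro i hi hik
        simp only [mem_Icc] at hi
        rw [sub_self, zero_pow (by omega : i - k ≠ 0), mul_zero]
      · intro h
        exact absurd (mem_Icc.mpr ⟨le_refl k, hkK.le⟩) h
    simp only [hf]
    rw [hsum, sub_self, zero_pow (by omega : K - k ≠ 0), mul_zero, mul_one, sub_zero]
    positivity
  have : (0:ℝ) ∈ Set.Ioo (f 0) (f 1) := ⟨hf0, hf1⟩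
  obtain ⟨ε, hε, hfε⟩ := intermediate_value_Ioo (by norm_num : (0:ℝ) ≤ 1) hcont.continuousOn this
  have key : ∀ y ∈ Set.Ioo (0:ℝ) 1, ∀ z ∈ Set.Ioo (0:ℝ) 1, f y = 0 → f z = 0 → y = z := by
    intro y hy z hz hfy hfz
    rcases lt_trichotomy y z with h | h | h
    · exact (waj_unique_aux k K hkK β hβ0 (1 - y) (1 - z) (by linarith [hz.2])
        (by linarith) (by rw [hf] at hfy; linarith) (by rw [hf] at hfz; linarith)).elim
    · exact h
    · exact (waj_unique_aux k K hkK β hβ0 (1 - z) (1 - y) (by linarith [hy.2])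
        (by linarith) (by rw [hf] at hfz; linarith) (by rw [hf] at hfy; linarith)).elim
  exact ⟨ε, ⟨hε, hfε⟩, fun y hy => key y hy.1 ε hε hy.2 hfε⟩
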